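/- arXiv:1402.2177 — 3 statements merged into one kernel-verified Lean document; each statement's English description precedes it below -/
import Mathlib

section
/- Let T be a dual integrable unitary representation of a countable discrete group Γ on a Hilbert space H, and 0 ≠ ψ ∈ H. Then there exists an isometric isomorphism S_ψ from the cyclic space ⟨ψ⟩ = closure of span{T(γ)ψ : γ ∈ Γ} onto L²(vNa(Γ), [ψ,ψ]) satisfying S_ψ[T(γ)ψ] = λ(γ) for all γ ∈ Γ. -/
noncomputable section
open scoped ENNReal ComplexConjugate

/-- The Hilbert space `ℓ²(I)` of square-summable families. -/
abbrev Hs (I : Type*) := lp (fun _ : I => ℂ) 2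

/-- The unitary operator on `ℓ²(I)` given by reindexing along a bijection `e` of the index
set: `(reindex e f) x = f (e.symm x)`. -/
noncomputable def reindex {I : Type*} (e : I ≃ I) : Hs I ≃ₗᵢ[ℂ] Hs I where
  toFun f := ⟨fun x => f (e.symm x), by
    apply memℓp_gen
    have h := (lp.memℓp f).summable (by norm_num : (0:ℝ) < (2:ℝ≥0∞).toReal)
    exact (Equiv.summable_iff e.symm (f := fun i => ‖f i‖ ^ (2:ℝ≥0∞).toReal)).mpr h⟩
  invFun f := ⟨fun x => f (e x), by
    apply memℓp_gen
    have h := (lp.memℓp f).summable (by norm_num : (0:ℝ) < (2:ℝ≥0∞).toReal)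
    exact (Equiv.summable_iff e (f := fun i => ‖f i‖ ^ (2:ℝ≥0∞).toReal)).mpr h⟩
  map_add' f g := by ext x; rfl
  map_smul' c f := by ext x; rfl
  left_inv f := by ext x; simp
  right_inv f := by ext x; simp
  norm_map' f := by
    have h2 : (0:ℝ) < (2:ℝ≥0∞).toReal := by norm_num
    rw [lp.norm_eq_tsum_rpow h2, lp.norm_eq_tsum_rpow h2]
    congr 1
    exact e.symm.tsum_eq (f := fun i => ‖f i‖ ^ (2:ℝ≥0∞).toReal)

/-- The left regular representation of `Γ` on `ℓ²(Γ)`, `λ(γ) δ_{γ'} = δ_{γ γ'}`,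
i.e. `(λ(γ) f)(x) = f (γ⁻¹ x)`, as a unitary operator. -/
noncomputable def lam {Γ : Type*} [Group Γ] (γ : Γ) : Hs Γ ≃ₗᵢ[ℂ] Hs Γ :=
  reindex (Equiv.mulLeft γ)

/-- The left regular representation as a bounded operator on `ℓ²(Γ)`. -/
noncomputable def lamCLM {Γ : Type*} [Group Γ] (γ : Γ) : Hs Γ →L[ℂ] Hs Γ :=
  (lam γ).toLinearIsometry.toContinuousLinearMap

/-- The canonical orthonormal basis vector `δ_γ` of `ℓ²(Γ)`. -/
noncomputable def delta {Γ : Type*} [Group Γ] [DecidableEq Γ] (γ : Γ) : Hs Γ :=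
  lp.single 2 γ (1 : ℂ)
/-- The pairing `⟪u, f⟫ = ∑ conj (u γ) * f γ` of a finitely supported vector against an
arbitrary function; this is the inner product of `ℓ²(Γ)` extended to pointwise-defined
vectors. -/
noncomputable def pairF {Γ : Type*} (u : Γ →₀ ℂ) (f : Γ → ℂ) : ℂ :=
  u.sum fun γ c => conj c * f γ

/-- Elements of the noncommutative `Lᵖ` spaces over `vNa(Γ)` are densely defined operators
on `ℓ²(Γ)`, defined (weakly) on the dense subspace of finitely supported vectors, which are
affiliated to `vNa(Γ)`, i.e. commute with the right regular representation
`ρ(γ) δ_{γ'} = δ_{γ' γ}`. -/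
def Affiliated {Γ : Type*} [Group Γ] (F : (Γ →₀ ℂ) →ₗ[ℂ] (Γ → ℂ)) : Prop :=
  ∀ (γ : Γ) (u : Γ →₀ ℂ) (x : Γ),
    F (Finsupp.mapDomain (fun y => y * γ) u) x = F u (x * γ⁻¹)

/-- Membership in `L¹(vNa(Γ))`: since `L¹ = L² · L²`, an affiliated operator is in `L¹`
iff its Fourier coefficient function `γ ↦ (F δₑ)(γ)` is the convolution of two square
summable kernels. -/
def MemL1 {Γ : Type*} [Group Γ] (F : (Γ →₀ ℂ) →ₗ[ℂ] (Γ → ℂ)) : Prop :=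
  ∃ g h : Γ → ℂ, Memℓp g 2 ∧ Memℓp h 2 ∧
    ∀ γ : Γ, F (Finsupp.single 1 1) γ = ∑' y, g y * h (y⁻¹ * γ)
/-- The action of the trigonometric polynomial `F = ∑_{γ ∈ Ω} a γ • λ(γ)` on pointwise
defined vectors. -/
noncomputable def convA {Γ : Type*} [Group Γ] (Ω : Finset Γ) (a : Γ → ℂ) (f : Γ → ℂ) :
    Γ → ℂ :=
  fun x => ∑ γ ∈ Ω, a γ * f (γ⁻¹ * x)

/-- The action of the adjoint `F* = ∑_{γ ∈ Ω} conj (a γ) • λ(γ)⁻¹` of the trigonometric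
polynomial `F = ∑_{γ ∈ Ω} a γ • λ(γ)` on pointwise defined vectors. -/
noncomputable def convAStar {Γ : Type*} [Group Γ] (Ω : Finset Γ) (a : Γ → ℂ) (f : Γ → ℂ) :
    Γ → ℂ :=
  fun x => ∑ γ ∈ Ω, conj (a γ) * f (γ * x)


/-! ### Auxiliary material for the proof -/

open Function in
/-- Extension by zero along an injection, as a linear isometry of `ℓ²` spaces. -/
noncomputable def extendIso {I J : Type*} (e : I ↪ J) : Hs I →ₗᵢ[ℂ] Hs J where
  toLinearMap :=
  { toFun := fun f => ⟨Function.extend e (⇑f) 0, by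
      apply memℓp_gen
      have key : (fun j => ‖Function.extend e (⇑f) 0 j‖ ^ (2 : ℝ≥0∞).toReal)
          = Function.extend e (fun i => ‖f i‖ ^ (2 : ℝ≥0∞).toReal) 0 := by
        funext j
        by_cases h : ∃ i, e i = j
        · obtain ⟨i, rfl⟩ := h
          rw [e.injective.extend_apply, e.injective.extend_apply]
        · rw [Function.extend_apply' _ _ _ h, Function.extend_apply' _ _ _ h,
            Pi.zero_apply, Pi.zero_apply, norm_zero, Real.zero_rpow (by norm_num)]
      rw [key]
      exact (summable_extend_zero e.injective).mpr
        ((lp.memℓp f).summable (by norm_num : (0:ℝ) < (2 : ℝ≥0∞).toReal))⟩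
    map_add' := fun f g => by
      ext j
      show Function.extend e (⇑(f + g)) 0 j
        = Function.extend e (⇑f) 0 j + Function.extend e (⇑g) 0 j
      by_cases h : ∃ i, e i = j
      · obtain ⟨i, rfl⟩ := h
        simp only [e.injective.extend_apply, lp.coeFn_add, Pi.add_apply]
      · simp only [Function.extend_apply' _ _ _ h, Pi.zero_apply, add_zero]
    map_smul' := fun c f => by
      ext j
      show Function.extend e (⇑(c • f)) 0 j = c • Function.extend e (⇑f) 0 j
      by_cases h : ∃ i, e i = j
      · obtain ⟨i, rfl⟩ := h
        simp only [e.injective.extend_apply, lp.coeFn_smul, Pi.smul_apply]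
      · simp only [Function.extend_apply' _ _ _ h, Pi.zero_apply, smul_zero] }
  norm_map' := fun f => by
    have h2 : (0:ℝ) < (2 : ℝ≥0∞).toReal := by norm_num
    rw [lp.norm_eq_tsum_rpow h2, lp.norm_eq_tsum_rpow h2]
    congr 1
    have key : (fun j => ‖Function.extend e (⇑f) 0 j‖ ^ (2 : ℝ≥0∞).toReal)
        = Function.extend e (fun i => ‖f i‖ ^ (2 : ℝ≥0∞).toReal) 0 := by
      funext j
      by_cases h : ∃ i, e i = j
      · obtain ⟨i, rfl⟩ := h
        rw [e.injective.extend_apply, e.injective.extend_apply]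
      · rw [Function.extend_apply' _ _ _ h, Function.extend_apply' _ _ _ h,
          Pi.zero_apply, Pi.zero_apply, norm_zero, Real.zero_rpow (by norm_num)]
    calc (∑' j, ‖Function.extend e (⇑f) 0 j‖ ^ (2 : ℝ≥0∞).toReal)
        = ∑' j, Function.extend e (fun i => ‖f i‖ ^ (2 : ℝ≥0∞).toReal) 0 j := by rw [key]
      _ = ∑' i, ‖f i‖ ^ (2 : ℝ≥0∞).toReal := tsum_extend_zero e.injective _

/-- An orthonormal set in a separable inner product space is countable. -/
theorem orthonormal_countable {E : Type*} [NormedAddCommGroup E] [InnerProductSpace ℂ E]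
    [TopologicalSpace.SeparableSpace E] {w : Set E}
    (hw : Orthonormal ℂ ((↑) : w → E)) : w.Countable := by
  apply Set.PairwiseDisjoint.countable_of_isOpen (s := fun x : E => Metric.ball x (2⁻¹ : ℝ))
  · intro x hx y hy hxy
    apply Metric.ball_disjoint_ball
    have hinner : (inner ℂ x y : ℂ) = 0 := by
      have := hw.2 (i := ⟨x, hx⟩) (j := ⟨y, hy⟩) (by simpa [Subtype.ext_iff] using hxy)
      simpa using this
    have hnx : ‖x‖ = 1 := by simpa using hw.1 ⟨x, hx⟩
    have hny : ‖y‖ = 1 := by simpa using hw.1 ⟨y, hy⟩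
    have hsq : ‖x - y‖ ^ 2 = 2 := by
      rw [@norm_sub_sq ℂ, hinner, hnx, hny]
      norm_num
    have hd : dist x y = ‖x - y‖ := dist_eq_norm x y
    nlinarith [norm_nonneg (x - y)]
  · intro i _; exact Metric.isOpen_ball
  · intro i _; exact Metric.nonempty_ball.2 (by norm_num)

set_option maxHeartbeats 1000000 in
/-- Let `T` be a dual integrable representation of a countable discrete
group `Γ` on `H` and `0 ≠ ψ ∈ H`.  Then there is an isometric isomorphism `S_ψ` from the
cyclic space `⟨ψ⟩ = span{T(γ)ψ}` onto the weighted space `L²(vNa(Γ), [ψ,ψ])` with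
`S_ψ(T(γ)ψ) = λ(γ)`.  The space `L²(vNa(Γ), [ψ,ψ])` is realized (as a separable Hilbert
space) as a closed subspace `K` of `ℓ²(Γ)` together with a linear map `j` with dense range
defined on trigonometric polynomials (identified with finitely supported coefficient
vectors) satisfying `⟨j(F₁), j(F₂)⟩ = τ(F₁* F₂ [ψ,ψ])`. -/
theorem cyclic_space_isometric_weighted_L2 {Γ : Type*} [Group Γ] [Countable Γ]
    {H : Type*} [NormedAddCommGroup H] [InnerProductSpace ℂ H] [CompleteSpace H]
    (T : Γ →* (H ≃ₗᵢ[ℂ] H))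
    (br : H → H → ((Γ →₀ ℂ) →ₗ[ℂ] (Γ → ℂ)))
    (haff : ∀ φ ψ : H, Affiliated (br φ ψ))
    (hL1 : ∀ φ ψ : H, MemL1 (br φ ψ))
    (hdual : ∀ (φ ψ : H) (γ : Γ), (inner ℂ ((T γ) ψ) φ : ℂ) = br φ ψ (Finsupp.single 1 1) γ) (ψ : H) (hψ : ψ ≠ 0) :
    ∃ K : Submodule ℂ (Hs Γ), IsClosed (K : Set (Hs Γ)) ∧
      ∃ (j : (Γ →₀ ℂ) →ₗ[ℂ] K)
        (S : ((Submodule.span ℂ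
                (Set.range fun γ : Γ => ((T γ) ψ : H))).topologicalClosure) ≃ₗᵢ[ℂ] K),
        DenseRange j ∧
        (∀ a b : Γ →₀ ℂ,
          (inner ℂ (j a) (j b) : ℂ)
            = pairF a (convA b.support (⇑b) (br ψ ψ (Finsupp.single 1 1)))) ∧
        (∀ (γ : Γ) (hmem : ((T γ) ψ : H) ∈ (Submodule.span ℂ
              (Set.range fun γ' : Γ => ((T γ') ψ : H))).topologicalClosure),
          S ⟨(T γ) ψ, hmem⟩ = j (Finsupp.single γ 1)) := by
  classical
  set g : Γ → H := fun γ : Γ => ((T γ) ψ : H) with hgdef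
  set M : Submodule ℂ H := Submodule.span ℂ (Set.range g) with hMdef
  set C : Submodule ℂ H := M.topologicalClosure with hCdef
  haveI : CompleteSpace ↥C := (Submodule.isClosed_topologicalClosure M).completeSpace_coe
  -- separability of the cyclic space
  have hsepset : TopologicalSpace.IsSeparable (C : Set H) := by
    rw [hCdef, Submodule.topologicalClosure_coe]
    exact ((Set.countable_range g).isSeparable.span).closure
  haveI : TopologicalSpace.SeparableSpace ↥C := hsepset.separableSpace
  -- Hilbert basis of the cyclic space
  obtain ⟨w, b, hb⟩ := exists_hilbertBasis ℂ ↥C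
  have hw : Orthonormal ℂ ((↑) : w → ↥C) := by rw [← hb]; exact b.orthonormal
  have hwc : w.Countable := orthonormal_countable hw
  -- an embedding of the basis index into Γ
  have hemb : Nonempty (↥w ↪ Γ) := by
    rcases finite_or_infinite Γ with hfin | hinf
    · haveI : Fintype Γ := Fintype.ofFinite Γ
      have hMfd : FiniteDimensional ℂ ↥M := by
        rw [hMdef]; exact FiniteDimensional.span_of_finite ℂ (Set.finite_range g)
      have hMc : IsClosed (M : Set H) := Submodule.closed_of_finiteDimensional M
      have hCM : C = M :=
        le_antisymm (Submodule.topologicalClosure_minimal M le_rfl hMc)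
          M.le_topologicalClosure
      have hli : LinearIndependent ℂ ((↑) : w → ↥C) := hw.linearIndependent
      have h1 : Cardinal.mk ↥w ≤ Module.rank ℂ ↥C := hli.cardinal_le_rank
      have h2 : Module.rank ℂ ↥C ≤ Cardinal.mk ↥(Set.range g) := by
        rw [hCM, hMdef]; exact rank_span_le (Set.range g)
      have h3 := Cardinal.mk_range_le_lift (f := g)
      exact Cardinal.lift_mk_le'.mp
        (le_trans (Cardinal.lift_le.mpr (h1.trans h2)) h3)
    · haveI : Countable ↥w := hwc.to_subtype
      obtain ⟨f, hf⟩ := (countable_iff_exists_injective ↥w).mp inferInstance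
      exact ⟨(⟨f, hf⟩ : ↥w ↪ ℕ).trans (Infinite.natEmbedding Γ)⟩
  obtain ⟨e⟩ := hemb
  -- the isometric embedding of the cyclic space into ℓ²(Γ)
  set U : ↥C →ₗᵢ[ℂ] Hs Γ := (extendIso e).comp b.repr.toLinearIsometry with hUdef
  set K : Submodule ℂ (Hs Γ) := LinearMap.range U.toLinearMap with hKdef
  have hKclosed : IsClosed (K : Set (Hs Γ)) := by
    have : (K : Set (Hs Γ)) = Set.range ⇑U := by
      rw [hKdef]; exact LinearMap.coe_range _
    rw [this]
    exact U.isometry.isClosedEmbedding.isClosed_range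
  set S0 : ↥C ≃ₗᵢ[ℂ] ↥K := U.equivRange with hS0def
  -- the generators inside the cyclic space
  have hmemC : ∀ γ : Γ, g γ ∈ C := fun γ =>
    M.le_topologicalClosure (Submodule.subset_span ⟨γ, rfl⟩)
  set v : Γ → ↥C := fun γ => ⟨g γ, hmemC γ⟩ with hvdef
  set Φ : (Γ →₀ ℂ) →ₗ[ℂ] ↥C := Finsupp.linearCombination ℂ v with hΦdef
  set j : (Γ →₀ ℂ) →ₗ[ℂ] ↥K := S0.toLinearIsometry.toLinearMap.comp Φ with hjdef
  -- dense range of j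
  have himg : Subtype.val '' Set.range ⇑Φ = (M : Set H) := by
    have h1 : Set.range ⇑Φ = ((Submodule.span ℂ (Set.range v) : Submodule ℂ ↥C) : Set ↥C) := by
      rw [hΦdef, ← LinearMap.coe_range, Finsupp.range_linearCombination]
    rw [h1]
    have h2 : Subtype.val '' ((Submodule.span ℂ (Set.range v) : Submodule ℂ ↥C) : Set ↥C)
        = ((Submodule.map C.subtype (Submodule.span ℂ (Set.range v))) : Set H) := by
      rw [Submodule.map_coe]; rfl
    rw [h2, Submodule.map_span, hMdef]
    congr 1
    rw [← Set.range_comp]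
    rfl
  have hΦdense : DenseRange ⇑Φ := by
    intro x
    rw [closure_subtype, himg]
    exact x.2
  have hjdense : DenseRange ⇑j := by
    have hj : ⇑j = ⇑S0 ∘ ⇑Φ := rfl
    rw [hj]
    exact S0.surjective.denseRange.comp hΦdense S0.continuous
  -- the reproducing kernel identity
  set w0 : Γ → ℂ := br ψ ψ (Finsupp.single 1 1) with hw0def
  have hker : ∀ x γ : Γ, (inner ℂ (g x) (g γ) : ℂ) = w0 (γ⁻¹ * x) := by
    intro x γ
    rw [hw0def, ← hdual ψ ψ (γ⁻¹ * x)]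
    have h1 : (T (γ⁻¹ * x)) ψ = (T γ⁻¹) (g x) := by
      rw [map_mul]; rfl
    have h2 : (T γ⁻¹) (g γ) = ψ := by
      show (T γ⁻¹) ((T γ) ψ) = ψ
      have : (T γ⁻¹) ((T γ) ψ) = (T (γ⁻¹ * γ)) ψ := by rw [map_mul]; rfl
      rw [this, inv_mul_cancel, map_one]
      rfl
    rw [h1, ← h2, LinearIsometryEquiv.inner_map_map]
  -- the coercion of Φ
  have hcoe : ∀ a : Γ →₀ ℂ, ((Φ a : ↥C) : H) = ∑ γ ∈ a.support, a γ • g γ := by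
    intro a
    rw [hΦdef, Finsupp.linearCombination_apply, Finsupp.sum]
    rw [Submodule.coe_sum]
    rfl
  refine ⟨K, hKclosed, j, S0, hjdense, ?_, ?_⟩
  · intro a c
    have hS : (inner ℂ (j a) (j c) : ℂ) = inner ℂ (Φ a) (Φ c) := S0.inner_map_map _ _
    rw [hS]
    have hCinner : (inner ℂ (Φ a) (Φ c) : ℂ) = inner ℂ ((Φ a : ↥C) : H) ((Φ c : ↥C) : H) := rfl
    rw [hCinner, hcoe, hcoe]
    rw [pairF]
    rw [Finsupp.sum]
    rw [sum_inner]
    refine Finset.sum_congr rfl fun x hx => ?_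
    rw [inner_smul_left, inner_sum]
    unfold convA
    rw [Finset.mul_sum, Finset.mul_sum]
    refine Finset.sum_congr rfl fun γ hγ => ?_
    rw [inner_smul_right, hker]
  · intro γ hmem
    have hΦs : Φ (Finsupp.single γ 1) = (⟨(T γ) ψ, hmem⟩ : ↥C) := by
      rw [hΦdef, Finsupp.linearCombination_single, one_smul]
    show S0 _ = S0 (Φ (Finsupp.single γ 1))
    rw [hΦs]
end
end

section
/- Let Γ be a countable discrete group acting on a Hilbert space H via a dual integrable representation T, ψ ∈ H and 0 < A ≤ B < ∞. Then {T(γ)ψ}_{γ∈Γ} is a frame for the cyclic space ⟨ψ⟩ with constants A, B if and only if A·P ≤ [ψ,ψ] ≤ B·P, where P is the orthogonal projection of ℓ²(Γ) onto the orthogonal complement of the kernel of [ψ,ψ]. -/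
noncomputable section
open scoped ENNReal ComplexConjugate

/-- The inclusion of finitely supported vectors into `ℓ²(Γ)`. -/
noncomputable def toH {Γ : Type*} [Group Γ] [DecidableEq Γ] (u : Γ →₀ ℂ) : Hs Γ :=
  ∑ γ ∈ u.support, lp.single 2 γ (u γ)

namespace FrameAux

lemma normSq_lp {I : Type*} (f : Hs I) : ‖f‖ ^ 2 = ∑' x, ‖f x‖ ^ 2 := by
  calc ‖f‖ ^ (2:ℕ) = ‖f‖ ^ (2:ℝ≥0∞).toReal := by norm_cast
    _ = ∑' i, ‖f i‖ ^ (2:ℝ≥0∞).toReal := lp.norm_rpow_eq_tsum (by norm_num) f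
    _ = ∑' i, ‖f i‖ ^ (2:ℕ) := by norm_cast

lemma summable_sq {I : Type*} (f : Hs I) : Summable fun x => ‖f x‖ ^ 2 := by
  have h := (lp.memℓp f).summable (by norm_num : 0 < (2:ℝ≥0∞).toReal)
  have he : (fun i => ‖f i‖ ^ (2:ℝ≥0∞).toReal) = fun i => ‖f i‖ ^ (2:ℕ) := by
    funext i; norm_cast
  rwa [he] at h

lemma inner_lp {I : Type*} (f g : Hs I) :
    (inner ℂ f g : ℂ) = ∑' x, conj (f x) * g x := by
  rw [lp.inner_eq_tsum]; exact tsum_congr fun x => by rw [RCLike.inner_apply]; ring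

/-- Cauchy–Schwarz for the positive symmetric form `(x, y) ↦ ⟪x, F y⟫`. -/
lemma cs_form {E : Type*} [NormedAddCommGroup E] [InnerProductSpace ℂ E]
    (F : E →L[ℂ] E)
    (hsym : ∀ x y : E, (inner ℂ (F x) y : ℂ) = inner ℂ x (F y))
    (hpos : ∀ x : E, 0 ≤ (inner ℂ x (F x) : ℂ).re) (x y : E) :
    ‖(inner ℂ x (F y) : ℂ)‖ ^ 2 ≤ (inner ℂ x (F x) : ℂ).re * (inner ℂ y (F y) : ℂ).re := by
  set c : ℂ := inner ℂ x (F y) with hc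
  rcases eq_or_ne c 0 with h0 | h0
  · rw [h0]; simpa using mul_nonneg (hpos x) (hpos y)
  · set μ : ℂ := c / (‖c‖ : ℂ) with hμ
    have hcc : (starRingEnd ℂ) c * c = ((‖c‖^2 : ℝ) : ℂ) := by
      rw [mul_comm, Complex.mul_conj, Complex.normSq_eq_norm_sq]
    have hcnorm : ((‖c‖:ℝ) : ℂ) ≠ 0 := by exact_mod_cast (norm_ne_zero_iff.mpr h0)
    have hμc : (starRingEnd ℂ) μ * c = (‖c‖ : ℂ) := by
      rw [hμ, map_div₀, Complex.conj_ofReal, div_mul_eq_mul_div, hcc,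
        div_eq_iff hcnorm]
      push_cast
      ring
    have hμc2 : μ * (starRingEnd ℂ) c = (‖c‖ : ℂ) := by
      rw [hμ, div_mul_eq_mul_div, mul_comm c ((starRingEnd ℂ) c), hcc,
        div_eq_iff hcnorm]
      push_cast
      ring
    have hμμ : (starRingEnd ℂ) μ * μ = 1 := by
      rw [hμ, map_div₀, Complex.conj_ofReal, div_mul_div_comm, hcc,
        div_eq_one_iff_eq (mul_ne_zero hcnorm hcnorm)]
      push_cast
      ring
    have hyx : (inner ℂ y (F x) : ℂ) = conj c := by
      rw [← hsym y x, ← inner_conj_symm, ← hc]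
    have key : ∀ t : ℝ, 0 ≤ (inner ℂ y (F y) : ℂ).re * (t * t)
        + (2 * ‖c‖) * t + (inner ℂ x (F x) : ℂ).re := by
      intro t
      have h := hpos (μ • x + (t : ℂ) • y)
      have hexp : (inner ℂ (μ • x + (t:ℂ) • y) (F (μ • x + (t:ℂ) • y)) : ℂ)
          = (inner ℂ x (F x) : ℂ) + ((t:ℂ) * (‖c‖:ℂ) + (t:ℂ) * (‖c‖:ℂ))
            + (t:ℂ) * (t:ℂ) * (inner ℂ y (F y) : ℂ) := by
        simp only [map_add, map_smul, inner_add_left, inner_add_right,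
          inner_smul_left, inner_smul_right, Complex.conj_ofReal, hyx, ← hc]
        linear_combination (inner ℂ x (F x) : ℂ) * hμμ + (t:ℂ) * hμc + (t:ℂ) * hμc2
      rw [hexp] at h
      simp only [Complex.add_re, ← Complex.ofReal_mul, Complex.ofReal_re,
        Complex.re_ofReal_mul] at h
      linarith
    have hd := discrim_le_zero key
    rw [discrim] at hd
    nlinarith [norm_nonneg c]

end FrameAux

open FrameAux in

/-- The finite linear combination of orbit vectors associated to a finitely supported
coefficient vector. -/
def phiu {Γ : Type*} [Group Γ] {H : Type*} [NormedAddCommGroup H] [Module ℂ H]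
    (T : Γ →* (H ≃ₗᵢ[ℂ] H)) (ψ : H) (u : Γ →₀ ℂ) : H :=
  u.sum fun γ c => (starRingEnd ℂ) c • ((T γ⁻¹) ψ)

set_option maxHeartbeats 1000000 in
/-- Let `Γ` act on `H` via a dual integrable representation `T`, let
`ψ ∈ H` and `0 < A ≤ B < ∞`.  Then `{T(γ)ψ}_{γ ∈ Γ}` is a frame for the cyclic space
`⟨ψ⟩` with constants `A, B` if and only if `A·P ≤ [ψ,ψ] ≤ B·P`, where `P` is the
orthogonal projection of `ℓ²(Γ)` onto the orthogonal complement of the kernel of `[ψ,ψ]`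
(equivalently, onto the closure of its range), and `F` denotes the bounded operator on
`ℓ²(Γ)` realizing `[ψ,ψ]`. -/
theorem frame_iff_bracket_support_bounds {Γ : Type*} [Group Γ] [Countable Γ] [DecidableEq Γ]
    {H : Type*} [NormedAddCommGroup H] [InnerProductSpace ℂ H] [CompleteSpace H]
    (T : Γ →* (H ≃ₗᵢ[ℂ] H))
    (br : H → H → ((Γ →₀ ℂ) →ₗ[ℂ] (Γ → ℂ)))
    (haff : ∀ φ ψ : H, Affiliated (br φ ψ))
    (hL1 : ∀ φ ψ : H, MemL1 (br φ ψ))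
    (hdual : ∀ (φ ψ : H) (γ : Γ), (inner ℂ ((T γ) ψ) φ : ℂ) = br φ ψ (Finsupp.single 1 1) γ) (ψ : H) (A B : ℝ) (hA : 0 < A) (hAB : A ≤ B)
    (F : Hs Γ →L[ℂ] Hs Γ)
    (hFbr : ∀ (u : Γ →₀ ℂ) (x : Γ), F (toH u) x = br ψ ψ u x)
    (P : Hs Γ →L[ℂ] Hs Γ) (hPsa : IsSelfAdjoint P) (hPidem : P ∘L P = P)
    (hPF : ∀ x : Hs Γ, P (F x) = F x)
    (hPran : ∀ x : Hs Γ, P x ∈ closure (Set.range fun y : Hs Γ => F y)) :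
    (∀ φ : H, φ ∈ (Submodule.span ℂ
          (Set.range fun γ : Γ => ((T γ) ψ : H))).topologicalClosure →
        Summable (fun γ : Γ => ‖(inner ℂ ((T γ) ψ) φ : ℂ)‖ ^ 2) ∧
        A * ‖φ‖ ^ 2 ≤ ∑' γ : Γ, ‖(inner ℂ ((T γ) ψ) φ : ℂ)‖ ^ 2 ∧
        (∑' γ : Γ, ‖(inner ℂ ((T γ) ψ) φ : ℂ)‖ ^ 2) ≤ B * ‖φ‖ ^ 2)
      ↔ (∀ x : Hs Γ,
          (inner ℂ x (F x) : ℂ).im = 0 ∧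
          A * (inner ℂ x (P x) : ℂ).re ≤ (inner ℂ x (F x) : ℂ).re ∧
          (inner ℂ x (F x) : ℂ).re ≤ B * (inner ℂ x (P x) : ℂ).re) := by
  classical
  have hre : ∀ z : ℂ, z.re ≤ ‖z‖ := fun z => by
    exact Complex.re_le_norm z
  -- ## Pointwise description of `toH`
  have hsingle : ∀ (γ x : Γ) (c : ℂ), (lp.single 2 γ c : Hs Γ) x = if x = γ then c else 0 := by
    intro γ x c
    rw [lp.single_apply]
    split_ifs with h
    · subst h; simp
    · simp [Pi.single_apply, h]
  have htoH : ∀ (u : Γ →₀ ℂ) (x : Γ), (toH u) x = u x := by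
    intro u x
    show (∑ γ ∈ u.support, lp.single 2 γ (u γ) : Hs Γ) x = u x
    rw [lp.coeFn_sum, Finset.sum_apply]
    simp only [hsingle]
    rw [Finset.sum_ite_eq u.support x (fun γ => u γ)]
    split_ifs with h
    · rfl
    · exact (Finsupp.notMem_support_iff.mp h).symm
  -- ## Density of the range of `toH`
  have hdense : ∀ f : Hs Γ, f ∈ closure (Set.range (toH : (Γ →₀ ℂ) → Hs Γ)) := by
    intro f
    have hs := lp.hasSum_single (E := fun _ : Γ => ℂ) (p := 2) (by norm_num) f
    refine mem_closure_of_tendsto hs (Filter.Eventually.of_forall fun s => ?_)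
    refine ⟨Finsupp.onFinset s (fun i => if i ∈ s then f i else 0)
      (fun i h => by by_contra hh; simp [hh] at h), ?_⟩
    apply lp.ext
    funext x
    rw [htoH]
    rw [lp.coeFn_sum, Finset.sum_apply]
    simp only [hsingle]
    rw [Finset.sum_ite_eq s x (fun γ => f γ)]
    simp [Finsupp.onFinset_apply]
  -- ## The bracket on basis vectors
  have hbr_single : ∀ (γ x : Γ) (c : ℂ),
      br ψ ψ (Finsupp.single γ c) x = c * (inner ℂ ((T (x * γ⁻¹)) ψ) ψ : ℂ) := by
    intro γ x c
    have h1 : Finsupp.single γ c = c • Finsupp.single γ (1:ℂ) := by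
      rw [Finsupp.smul_single, smul_eq_mul, mul_one]
    have h2 : Finsupp.single γ (1:ℂ)
        = Finsupp.mapDomain (fun y => y * γ) (Finsupp.single 1 1) := by
      rw [Finsupp.mapDomain_single, one_mul]
    rw [h1, map_smul]
    simp only [Pi.smul_apply, smul_eq_mul]
    rw [h2, haff ψ ψ γ (Finsupp.single 1 1) x, ← hdual ψ ψ (x * γ⁻¹)]
  have hinner_shift : ∀ (γ x : Γ), (inner ℂ ((T (x * γ⁻¹)) ψ) ψ : ℂ)
      = inner ℂ ((T γ⁻¹) ψ) ((T x⁻¹) ψ) := by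
    intro γ x
    have h1 : (T x⁻¹) ((T (x * γ⁻¹)) ψ) = (T γ⁻¹) ψ := by
      have hm : T x⁻¹ * T (x * γ⁻¹) = T γ⁻¹ := by
        rw [← map_mul]
        congr 1
        group
      calc (T x⁻¹) ((T (x * γ⁻¹)) ψ) = (T x⁻¹ * T (x * γ⁻¹)) ψ := rfl
        _ = (T γ⁻¹) ψ := by rw [hm]
    rw [← h1, LinearIsometryEquiv.inner_map_map]
  -- ## The key pointwise formula for `F (toH u)`
  have hFkey : ∀ (u : Γ →₀ ℂ) (x : Γ),
      F (toH u) x = conj (inner ℂ ((T x⁻¹) ψ) (phiu T ψ u) : ℂ) := by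
    intro u x
    rw [hFbr]
    conv_lhs => rw [← Finsupp.sum_single u]
    rw [Finsupp.sum, map_sum, Finset.sum_apply]
    show _ = conj (inner ℂ ((T x⁻¹) ψ) (u.sum fun γ c => conj c • ((T γ⁻¹) ψ)) : ℂ)
    rw [Finsupp.sum, inner_sum, map_sum]
    refine Finset.sum_congr rfl fun γ hγ => ?_
    rw [hbr_single, hinner_shift, inner_smul_right, map_mul, Complex.conj_conj,
      inner_conj_symm]
  -- ## The quadratic form of `F` on finitely supported vectors
  have hform : ∀ u : Γ →₀ ℂ,
      (inner ℂ (toH u) (F (toH u)) : ℂ) = ((‖phiu T ψ u‖ : ℝ) : ℂ)^2 := by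
    intro u
    rw [FrameAux.inner_lp]
    have hterm : ∀ x, conj ((toH u) x) * F (toH u) x
        = conj (u x * (inner ℂ ((T x⁻¹) ψ) (phiu T ψ u) : ℂ)) := by
      intro x; rw [htoH, hFkey, map_mul]
    rw [tsum_congr hterm, tsum_eq_sum (s := u.support)
      (fun x hx => by rw [Finsupp.notMem_support_iff.mp hx]; simp), ← map_sum]
    have key : ∀ v : H, (∑ x ∈ u.support, u x * (inner ℂ ((T x⁻¹) ψ) v : ℂ))
        = inner ℂ (phiu T ψ u) v := by
      intro v
      rw [show phiu T ψ u
          = ∑ x ∈ u.support, (starRingEnd ℂ) (u x) • ((T x⁻¹) ψ) from rfl, sum_inner]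
      refine Finset.sum_congr rfl fun x hx => ?_
      rw [inner_smul_left, Complex.conj_conj]
    rw [key (phiu T ψ u), inner_conj_symm]
    exact inner_self_eq_norm_sq_to_K _
  have hformre : ∀ u : Γ →₀ ℂ, (inner ℂ (toH u) (F (toH u)) : ℂ).re = ‖phiu T ψ u‖^2 := by
    intro u; rw [hform]; norm_cast
  have hformim : ∀ u : Γ →₀ ℂ, (inner ℂ (toH u) (F (toH u)) : ℂ).im = 0 := by
    intro u; rw [hform]; norm_cast
  -- ## The norm of `F (toH u)` is the frame sum of `phiu u`
  have hFdata : ∀ u : Γ →₀ ℂ,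
      Summable (fun γ : Γ => ‖(inner ℂ ((T γ) ψ) (phiu T ψ u) : ℂ)‖^2) ∧
      ‖F (toH u)‖^2 = ∑' γ : Γ, ‖(inner ℂ ((T γ) ψ) (phiu T ψ u) : ℂ)‖^2 := by
    intro u
    have h1 : ∀ x, ‖F (toH u) x‖ = ‖(inner ℂ ((T x⁻¹) ψ) (phiu T ψ u) : ℂ)‖ := by
      intro x; rw [hFkey]; exact RCLike.norm_conj _
    constructor
    · refine (Equiv.summable_iff (Equiv.inv Γ)).mp ?_
      refine (FrameAux.summable_sq (F (toH u))).congr fun x => ?_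
      simp only [Function.comp_apply, Equiv.inv_apply]
      rw [h1]
    · rw [FrameAux.normSq_lp]
      calc ∑' x : Γ, ‖F (toH u) x‖^2
          = ∑' x : Γ, ‖(inner ℂ ((T x⁻¹) ψ) (phiu T ψ u) : ℂ)‖^2 :=
            tsum_congr fun x => by rw [h1]
        _ = _ := Equiv.tsum_eq (Equiv.inv Γ)
            fun γ : Γ => ‖(inner ℂ ((T γ) ψ) (phiu T ψ u) : ℂ)‖^2
  -- ## `phiu u` lies in the linear span; conversely every span element is a `phiu u`
  have hφspan : ∀ u : Γ →₀ ℂ,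
      phiu T ψ u ∈ Submodule.span ℂ (Set.range fun γ : Γ => ((T γ) ψ : H)) := by
    intro u
    refine Submodule.sum_mem _ fun γ _ => Submodule.smul_mem _ _ ?_
    exact Submodule.subset_span ⟨γ⁻¹, rfl⟩
  have hsurj : ∀ v ∈ Submodule.span ℂ (Set.range fun γ : Γ => ((T γ) ψ : H)),
      ∃ u : Γ →₀ ℂ, phiu T ψ u = v := by
    intro v hv
    induction hv using Submodule.span_induction with
    | mem x hx =>
        obtain ⟨γ, rfl⟩ := hx
        refine ⟨Finsupp.single γ⁻¹ 1, ?_⟩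
        rw [phiu, Finsupp.sum_single_index (by simp)]
        simp
    | zero => exact ⟨0, by simp [phiu]⟩
    | add x y hx' hy' hx hy =>
        obtain ⟨u1, rfl⟩ := hx
        obtain ⟨u2, rfl⟩ := hy
        refine ⟨u1 + u2, ?_⟩
        rw [phiu, Finsupp.sum_add_index' (fun γ => by simp)
          (fun γ b c => by rw [map_add, add_smul])]
        rfl
    | smul a x hx' hx =>
        obtain ⟨u, rfl⟩ := hx
        refine ⟨conj a • u, ?_⟩
        rw [phiu, Finsupp.sum_smul_index' (fun γ => by simp)]
        rw [show (phiu T ψ u) = u.sum fun γ c => conj c • ((T γ⁻¹) ψ) from rfl]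
        rw [Finsupp.smul_sum]
        refine Finsupp.sum_congr fun γ _ => ?_
        rw [smul_eq_mul, map_mul, Complex.conj_conj, mul_smul]
  -- ## Properties of the projection `P`
  have hP : ∀ a b : Hs Γ, (inner ℂ (P a) b : ℂ) = inner ℂ a (P b) := by
    intro a b
    conv_lhs => rw [← hPsa.adjoint_eq]
    exact ContinuousLinearMap.adjoint_inner_left P b a
  have hrePx : ∀ z : Hs Γ, (inner ℂ z (P z) : ℂ) = ((‖P z‖ : ℝ) : ℂ)^2 := by
    intro z
    have h2 : P (P z) = P z := by
      conv_lhs => rw [show P (P z) = (P.comp P) z from rfl, hPidem]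
    calc (inner ℂ z (P z) : ℂ) = inner ℂ z (P (P z)) := by rw [h2]
      _ = inner ℂ (P z) (P z) := (hP z (P z)).symm
      _ = ((‖P z‖ : ℝ) : ℂ)^2 := inner_self_eq_norm_sq_to_K _
  have hrePxre : ∀ z : Hs Γ, (inner ℂ z (P z) : ℂ).re = ‖P z‖^2 := by
    intro z; rw [hrePx]; norm_cast
  have hPnorm : ∀ z : Hs Γ, ‖P z‖ ≤ ‖z‖ := by
    intro z
    have h1 : ‖P z‖^2 = (inner ℂ z (P z) : ℂ).re := (hrePxre z).symm
    have h2 : (inner ℂ z (P z) : ℂ).re ≤ ‖z‖ * ‖P z‖ :=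
      (hre _).trans (norm_inner_le_norm _ _)
    rcases le_or_gt ‖P z‖ 0 with h | h
    · exact h.trans (norm_nonneg z)
    · nlinarith [h1, h2]
  constructor
  · -- Frame bounds ⇒ operator inequalities
    intro hfr
    -- the four properties hold on the dense range of `toH`
    have hPro : ∀ x : Hs Γ, (inner ℂ x (F x) : ℂ).im = 0 ∧ 0 ≤ (inner ℂ x (F x) : ℂ).re
        ∧ A * (inner ℂ x (F x) : ℂ).re ≤ ‖F x‖^2 ∧ ‖F x‖^2 ≤ B * (inner ℂ x (F x) : ℂ).re := by
      have hdr : DenseRange (toH : (Γ →₀ ℂ) → Hs Γ) := fun f => hdense f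
      intro x
      refine hdr.induction_on x ?_ ?_
      · have hc1 : Continuous fun z : Hs Γ => (inner ℂ z (F z) : ℂ) :=
          continuous_id.inner F.continuous
        have hc2 : Continuous fun z : Hs Γ => ‖F z‖^2 := (F.continuous.norm).pow 2
        have hs1 : IsClosed {z : Hs Γ | (inner ℂ z (F z) : ℂ).im = 0} :=
          isClosed_eq (Complex.continuous_im.comp hc1) continuous_const
        have hs2 : IsClosed {z : Hs Γ | 0 ≤ (inner ℂ z (F z) : ℂ).re} :=
          isClosed_le continuous_const (Complex.continuous_re.comp hc1)
        have hs3 : IsClosed {z : Hs Γ | A * (inner ℂ z (F z) : ℂ).re ≤ ‖F z‖^2} :=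
          isClosed_le (continuous_const.mul (Complex.continuous_re.comp hc1)) hc2
        have hs4 : IsClosed {z : Hs Γ | ‖F z‖^2 ≤ B * (inner ℂ z (F z) : ℂ).re} :=
          isClosed_le hc2 (continuous_const.mul (Complex.continuous_re.comp hc1))
        exact hs1.inter (hs2.inter (hs3.inter hs4))
      · intro u
        obtain ⟨hsum, hlow, hupp⟩ := hfr (phiu T ψ u)
          (Submodule.le_topologicalClosure _ (hφspan u))
        have h1 : (inner ℂ (toH u) (F (toH u)) : ℂ).im = 0 := hformim u
        have h2 : (inner ℂ (toH u) (F (toH u)) : ℂ).re = ‖phiu T ψ u‖^2 := hformre u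
        refine ⟨h1, ?_, ?_, ?_⟩
        · rw [h2]; positivity
        · rw [h2, (hFdata u).2]; exact hlow
        · rw [h2, (hFdata u).2]; exact hupp
    have him : ∀ x : Hs Γ, (inner ℂ x (F x) : ℂ).im = 0 := fun x => (hPro x).1
    have hposF : ∀ x : Hs Γ, 0 ≤ (inner ℂ x (F x) : ℂ).re := fun x => (hPro x).2.1
    have hsymF : ∀ a b : Hs Γ, (inner ℂ (F a) b : ℂ) = inner ℂ a (F b) := by
      have hsymm : (F : Hs Γ →ₗ[ℂ] Hs Γ).IsSymmetric := by
        rw [LinearMap.isSymmetric_iff_inner_map_self_real]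
        intro v
        show conj (inner ℂ (F v) v : ℂ) = (inner ℂ (F v) v : ℂ)
        rw [← inner_conj_symm, Complex.conj_conj]
        exact (Complex.conj_eq_iff_im.mpr (him v)).symm
      exact fun a b => hsymm a b
    have hFP : ∀ z : Hs Γ, F (P z) = F z := by
      intro z
      refine ext_inner_right ℂ fun v => ?_
      rw [hsymF, hP, hPF, ← hsymF]
    have hrestr : ∀ z : Hs Γ, (inner ℂ z (F z) : ℂ) = inner ℂ (P z) (F (P z)) := by
      intro z
      rw [hFP, ← hPF z, ← hP, hPF]
    have hnormFle : ∀ z : Hs Γ, ‖F z‖ ≤ B * ‖z‖ := by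
      intro z
      have h1 : ‖F z‖^2 ≤ B * (‖z‖ * ‖F z‖) := by
        refine ((hPro z).2.2.2).trans ?_
        have h := (hre (inner ℂ z (F z) : ℂ)).trans (norm_inner_le_norm z (F z))
        nlinarith [h, hA.le.trans hAB]
      rcases le_or_gt ‖F z‖ 0 with h | h
      · refine h.trans ?_
        have hB := hA.trans_le hAB
        positivity
      · nlinarith [h1]
    intro x
    refine ⟨him x, ?_, ?_⟩
    · -- lower bound
      have hA2 : ∀ y ∈ closure (Set.range fun z : Hs Γ => F z),
          A * ‖y‖^2 ≤ (inner ℂ y (F y) : ℂ).re := by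
        have hcl : IsClosed {y : Hs Γ | A * ‖y‖^2 ≤ (inner ℂ y (F y) : ℂ).re} :=
          isClosed_le (continuous_const.mul (continuous_norm.pow 2))
            (Complex.continuous_re.comp (continuous_id.inner F.continuous))
        intro y hy
        refine hcl.closure_subset ((closure_mono ?_) hy)
        rintro _ ⟨z, rfl⟩
        -- Cauchy–Schwarz for the form of `F`
        have hcs := FrameAux.cs_form F hsymF hposF (F z) z
        have hself : ‖(inner ℂ (F z) (F (F z)) : ℂ)‖ = ‖(inner ℂ (F z) (F (F z)) : ℂ)‖ := rfl
        have hFF : (inner ℂ (F z) (F z) : ℂ) = ((‖F z‖ : ℝ) : ℂ)^2 :=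
          inner_self_eq_norm_sq_to_K (F z)
        have hcs' : (‖F z‖^2)^2 ≤ (inner ℂ (F z) (F (F z)) : ℂ).re * (inner ℂ z (F z) : ℂ).re := by
          have hn : ‖(inner ℂ (F z) (F z) : ℂ)‖^2 = (‖F z‖^2)^2 := by
            rw [inner_self_eq_norm_sq_to_K, norm_pow, RCLike.norm_ofReal, abs_norm]
          calc (‖F z‖^2)^2 = ‖(inner ℂ (F z) (F z) : ℂ)‖^2 := hn.symm
            _ ≤ (inner ℂ (F z) (F (F z)) : ℂ).re * (inner ℂ z (F z) : ℂ).re := hcs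
        have hAt : A * (inner ℂ z (F z) : ℂ).re ≤ ‖F z‖^2 := (hPro z).2.2.1
        show A * ‖F z‖^2 ≤ (inner ℂ (F z) (F (F z)) : ℂ).re
        rcases eq_or_lt_of_le (sq_nonneg ‖F z‖) with h0 | h0
        · rw [← h0, mul_zero]
          exact hposF (F z)
        · have hnn := hposF (F z)
          have ht := hposF z
          have step : A * ‖F z‖^2 * ‖F z‖^2
              ≤ (inner ℂ (F z) (F (F z)) : ℂ).re * ‖F z‖^2 := by
            nlinarith [hcs', hAt, hnn, ht, hA]
          exact le_of_mul_le_mul_right step h0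
      have h1 : A * (inner ℂ x (P x) : ℂ).re = A * ‖P x‖^2 := by
        rw [hrePxre]
      rw [h1, hrestr]
      exact hA2 (P x) (hPran x)
    · -- upper bound
      have h1 : (inner ℂ x (F x) : ℂ).re ≤ ‖P x‖ * ‖F (P x)‖ := by
        rw [hrestr]
        exact (hre _).trans (norm_inner_le_norm _ _)
      have h2 : ‖P x‖ * ‖F (P x)‖ ≤ ‖P x‖ * (B * ‖P x‖) :=
        mul_le_mul_of_nonneg_left (hnormFle (P x)) (norm_nonneg _)
      have h3 : (inner ℂ x (P x) : ℂ).re = ‖P x‖^2 := hrePxre x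
      rw [h3]
      nlinarith [h1, h2]
  · -- Operator inequalities ⇒ frame bounds
    intro hop
    have him : ∀ x : Hs Γ, (inner ℂ x (F x) : ℂ).im = 0 := fun x => (hop x).1
    have hsymF : ∀ a b : Hs Γ, (inner ℂ (F a) b : ℂ) = inner ℂ a (F b) := by
      have hsymm : (F : Hs Γ →ₗ[ℂ] Hs Γ).IsSymmetric := by
        rw [LinearMap.isSymmetric_iff_inner_map_self_real]
        intro v
        show conj (inner ℂ (F v) v : ℂ) = (inner ℂ (F v) v : ℂ)
        rw [← inner_conj_symm, Complex.conj_conj]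
        exact (Complex.conj_eq_iff_im.mpr (him v)).symm
      exact fun a b => hsymm a b
    have hposF : ∀ x : Hs Γ, 0 ≤ (inner ℂ x (F x) : ℂ).re := by
      intro x
      have h1 := (hop x).2.1
      have h2 : 0 ≤ A * (inner ℂ x (P x) : ℂ).re := by
        rw [hrePxre]
        positivity
      linarith
    have hFP : ∀ z : Hs Γ, F (P z) = F z := by
      intro z
      refine ext_inner_right ℂ fun v => ?_
      rw [hsymF, hP, hPF, ← hsymF]
    have hrestr : ∀ z : Hs Γ, (inner ℂ z (F z) : ℂ) = inner ℂ (P z) (F (P z)) := by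
      intro z
      rw [hFP, ← hPF z, ← hP, hPF]
    -- `‖F z‖² ≤ B ⟪z, F z⟫`
    have hFB2 : ∀ z : Hs Γ, ‖F z‖^2 ≤ B * (inner ℂ z (F z) : ℂ).re := by
      intro z
      have hcs := FrameAux.cs_form F hsymF hposF (F z) z
      have hFF : ‖(inner ℂ (F z) (F z) : ℂ)‖^2 = (‖F z‖^2)^2 := by
        rw [inner_self_eq_norm_sq_to_K, norm_pow, RCLike.norm_ofReal, abs_norm]
      rw [hFF] at hcs
      have hup := (hop (F z)).2.2
      have hPz : (inner ℂ (F z) (P (F z)) : ℂ).re = ‖P (F z)‖^2 := hrePxre (F z)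
      have h2 : (inner ℂ (F z) (F (F z)) : ℂ).re ≤ B * ‖F z‖^2 := by
        refine hup.trans ?_
        rw [hPz]
        have hPn := hPnorm (F z)
        have hB : 0 ≤ B := (hA.trans_le hAB).le
        have hsq : ‖P (F z)‖^2 ≤ ‖F z‖^2 := by
          nlinarith [hPn, norm_nonneg (P (F z))]
        exact mul_le_mul_of_nonneg_left hsq hB
      have ht := hposF z
      rcases eq_or_lt_of_le (sq_nonneg ‖F z‖) with h0 | h0
      · rw [← h0]
        exact mul_nonneg (hA.trans_le hAB).le ht
      · have hB : 0 < B := hA.trans_le hAB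
        nlinarith [hcs, h2, ht, h0]
    -- `A ⟪z, F z⟫ ≤ ‖F z‖²`
    have hAF2 : ∀ z : Hs Γ, A * (inner ℂ z (F z) : ℂ).re ≤ ‖F z‖^2 := by
      intro z
      have ht := hposF z
      have hPz : (inner ℂ z (P z) : ℂ).re = ‖P z‖^2 := hrePxre z
      have hlo := (hop z).2.1
      rw [hPz] at hlo
      have h1 : (inner ℂ z (F z) : ℂ).re ≤ ‖P z‖ * ‖F z‖ := by
        calc (inner ℂ z (F z) : ℂ).re = (inner ℂ (P z) (F (P z)) : ℂ).re := by rw [hrestr]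
          _ ≤ ‖(inner ℂ (P z) (F (P z)) : ℂ)‖ := hre _
          _ ≤ ‖P z‖ * ‖F (P z)‖ := norm_inner_le_norm _ _
          _ = ‖P z‖ * ‖F z‖ := by rw [hFP]
      rcases eq_or_lt_of_le ht with h0 | h0
      · rw [← h0, mul_zero]
        positivity
      · have hsq : (inner ℂ z (F z) : ℂ).re^2 ≤ ‖P z‖^2 * ‖F z‖^2 := by
          nlinarith [h1, ht, norm_nonneg (P z), norm_nonneg (F z)]
        have h2 : A * ((inner ℂ z (F z) : ℂ).re^2) ≤ (inner ℂ z (F z) : ℂ).re * ‖F z‖^2 := by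
          nlinarith [mul_le_mul_of_nonneg_left hsq hA.le,
            mul_le_mul_of_nonneg_right hlo (sq_nonneg ‖F z‖)]
        exact le_of_mul_le_mul_right (by nlinarith [h2]) h0
    -- the closed span
    intro φ hφ
    have hφ' : φ ∈ closure ((Submodule.span ℂ
        (Set.range fun γ : Γ => ((T γ) ψ : H)) : Submodule ℂ H) : Set H) := by
      rwa [← Submodule.topologicalClosure_coe]
    obtain ⟨w, hwmem, hwlim⟩ := mem_closure_iff_seq_limit.mp hφ'
    choose u hu using fun n => hsurj (w n) (hwmem n)
    -- quantities for elements of the span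
    have hspan_sum : ∀ n (s : Finset Γ),
        ∑ γ ∈ s, ‖(inner ℂ ((T γ) ψ) (w n) : ℂ)‖^2 ≤ B * ‖w n‖^2 := by
      intro n s
      have h1 : ∑ γ ∈ s, ‖(inner ℂ ((T γ) ψ) (w n) : ℂ)‖^2
          ≤ ∑' γ : Γ, ‖(inner ℂ ((T γ) ψ) (w n) : ℂ)‖^2 := by
        rw [← hu n]
        exact Summable.sum_le_tsum s (fun γ _ => by positivity) (hFdata (u n)).1
      have h2 : (∑' γ : Γ, ‖(inner ℂ ((T γ) ψ) (w n) : ℂ)‖^2) = ‖F (toH (u n))‖^2 := by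
        rw [← hu n]
        exact ((hFdata (u n)).2).symm
      have h3 : (inner ℂ (toH (u n)) (F (toH (u n))) : ℂ).re = ‖w n‖^2 := by
        rw [hformre, hu n]
      have h4 := hFB2 (toH (u n))
      rw [h3] at h4
      linarith [h1, h2.le, h2.ge, h4]
    -- upper bound for every element of the closure
    have hup_closure : ∀ χ : H, χ ∈ (Submodule.span ℂ
        (Set.range fun γ : Γ => ((T γ) ψ : H))).topologicalClosure →
        ∀ s : Finset Γ, ∑ γ ∈ s, ‖(inner ℂ ((T γ) ψ) χ : ℂ)‖^2 ≤ B * ‖χ‖^2 := by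
      intro χ hχ s
      have hχ' : χ ∈ closure ((Submodule.span ℂ
          (Set.range fun γ : Γ => ((T γ) ψ : H)) : Submodule ℂ H) : Set H) := by
        rwa [← Submodule.topologicalClosure_coe]
      obtain ⟨v, hvmem, hvlim⟩ := mem_closure_iff_seq_limit.mp hχ'
      choose u' hu' using fun n => hsurj (v n) (hvmem n)
      have hlhs : Filter.Tendsto (fun n => ∑ γ ∈ s, ‖(inner ℂ ((T γ) ψ) (v n) : ℂ)‖^2)
          Filter.atTop (nhds (∑ γ ∈ s, ‖(inner ℂ ((T γ) ψ) χ : ℂ)‖^2)) := by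
        refine tendsto_finset_sum s fun γ _ => ?_
        have hc : Continuous fun z : H => ‖(inner ℂ ((T γ) ψ) z : ℂ)‖^2 :=
          ((continuous_const.inner continuous_id).norm).pow 2
        exact (hc.tendsto χ).comp hvlim
      have hrhs : Filter.Tendsto (fun n => B * ‖v n‖^2)
          Filter.atTop (nhds (B * ‖χ‖^2)) := by
        have hc : Continuous fun z : H => B * ‖z‖^2 :=
          continuous_const.mul (continuous_norm.pow 2)
        exact (hc.tendsto χ).comp hvlim
      refine le_of_tendsto_of_tendsto' hlhs hrhs fun n => ?_
      have h1 : ∑ γ ∈ s, ‖(inner ℂ ((T γ) ψ) (v n) : ℂ)‖^2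
          ≤ ∑' γ : Γ, ‖(inner ℂ ((T γ) ψ) (v n) : ℂ)‖^2 := by
        rw [← hu' n]
        exact Summable.sum_le_tsum s (fun γ _ => by positivity) (hFdata (u' n)).1
      have h2 : (∑' γ : Γ, ‖(inner ℂ ((T γ) ψ) (v n) : ℂ)‖^2) = ‖F (toH (u' n))‖^2 := by
        rw [← hu' n]
        exact ((hFdata (u' n)).2).symm
      have h3 : (inner ℂ (toH (u' n)) (F (toH (u' n))) : ℂ).re = ‖v n‖^2 := by
        rw [hformre, hu' n]
      have h4 := hFB2 (toH (u' n))
      rw [h3] at h4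
      linarith [h1, h2.le, h4]
    have hsummable : ∀ χ : H, χ ∈ (Submodule.span ℂ
        (Set.range fun γ : Γ => ((T γ) ψ : H))).topologicalClosure →
        Summable (fun γ : Γ => ‖(inner ℂ ((T γ) ψ) χ : ℂ)‖^2) := by
      intro χ hχ
      exact summable_of_sum_le (fun γ => by positivity) (hup_closure χ hχ)
    -- the analysis vector of an element of the closure
    set sp := (Submodule.span ℂ
        (Set.range fun γ : Γ => ((T γ) ψ : H))).topologicalClosure with hspdef
    have hmem2 : ∀ χ : sp, Memℓp (fun γ : Γ => (inner ℂ ((T γ) ψ) (χ : H) : ℂ)) 2 := by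
      intro χ
      apply memℓp_gen
      have hs := hsummable (χ : H) χ.2
      have he : (fun γ : Γ => ‖(inner ℂ ((T γ) ψ) (χ : H) : ℂ)‖ ^ (2:ℝ≥0∞).toReal)
          = fun γ : Γ => ‖(inner ℂ ((T γ) ψ) (χ : H) : ℂ)‖ ^ (2:ℕ) := by
        funext γ; norm_cast
      rw [he]
      exact hs
    set dv : sp → Hs Γ := fun χ => ⟨fun γ => (inner ℂ ((T γ) ψ) (χ : H) : ℂ), hmem2 χ⟩
      with hdvdef
    have hdvapp : ∀ (χ : sp) (γ : Γ), (dv χ) γ = (inner ℂ ((T γ) ψ) (χ : H) : ℂ) := by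
      intro χ γ; rfl
    have hdvnorm : ∀ χ : sp, ‖dv χ‖^2 = ∑' γ : Γ, ‖(inner ℂ ((T γ) ψ) (χ : H) : ℂ)‖^2 := by
      intro χ
      rw [FrameAux.normSq_lp]
    have hdvsub : ∀ χ₁ χ₂ : sp, dv χ₁ - dv χ₂ = dv (χ₁ - χ₂) := by
      intro χ₁ χ₂
      apply lp.ext
      funext γ
      rw [lp.coeFn_sub, Pi.sub_apply, hdvapp, hdvapp, hdvapp]
      rw [Submodule.coe_sub, inner_sub_right]
    have hdvbound : ∀ χ : sp, ‖dv χ‖ ≤ Real.sqrt B * ‖(χ : H)‖ := by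
      intro χ
      have h1 : ‖dv χ‖^2 ≤ B * ‖(χ : H)‖^2 := by
        rw [hdvnorm]
        exact Summable.tsum_le_of_sum_le (hsummable _ χ.2) (hup_closure _ χ.2)
      have h2 : (0:ℝ) ≤ Real.sqrt B * ‖(χ : H)‖ := by positivity
      nlinarith [Real.sq_sqrt (hA.trans_le hAB).le, norm_nonneg (dv χ), h1, h2,
        Real.sqrt_nonneg B, norm_nonneg (χ : H)]
    set Φ : sp := ⟨φ, hφ⟩ with hΦdef
    set W : ℕ → sp := fun n => ⟨w n, Submodule.le_topologicalClosure _ (hwmem n)⟩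
      with hWdef
    have hdvlim : Filter.Tendsto (fun n => ‖dv (W n)‖) Filter.atTop (nhds ‖dv Φ‖) := by
      have h0 : Filter.Tendsto (fun n => ‖dv (W n) - dv Φ‖) Filter.atTop (nhds 0) := by
        have hb : ∀ n, ‖dv (W n) - dv Φ‖ ≤ Real.sqrt B * ‖w n - φ‖ := by
          intro n
          rw [hdvsub]
          have := hdvbound (W n - Φ)
          simpa using this
        have hz : Filter.Tendsto (fun n => Real.sqrt B * ‖w n - φ‖)
            Filter.atTop (nhds 0) := by
          have : Filter.Tendsto (fun n => ‖w n - φ‖) Filter.atTop (nhds 0) :=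
            tendsto_iff_norm_sub_tendsto_zero.mp hwlim
          simpa using this.const_mul (Real.sqrt B)
        exact squeeze_zero (fun n => norm_nonneg _) hb hz
      have hlim : Filter.Tendsto (fun n => dv (W n)) Filter.atTop (nhds (dv Φ)) := by
        rw [tendsto_iff_norm_sub_tendsto_zero]
        exact h0
      exact (continuous_norm.tendsto _).comp hlim
    refine ⟨hsummable φ hφ, ?_, Summable.tsum_le_of_sum_le (hsummable φ hφ) (hup_closure φ hφ)⟩
    -- lower bound by passing to the limit
    have hlhs : Filter.Tendsto (fun n => A * ‖w n‖^2) Filter.atTop (nhds (A * ‖φ‖^2)) := by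
      have hc : Continuous fun z : H => A * ‖z‖^2 :=
        continuous_const.mul (continuous_norm.pow 2)
      exact (hc.tendsto φ).comp hwlim
    have hrhs : Filter.Tendsto (fun n => ‖dv (W n)‖^2) Filter.atTop
        (nhds (‖dv Φ‖^2)) := hdvlim.pow 2
    have hineq : ∀ n, A * ‖w n‖^2 ≤ ‖dv (W n)‖^2 := by
      intro n
      have h3 : (inner ℂ (toH (u n)) (F (toH (u n))) : ℂ).re = ‖w n‖^2 := by
        rw [hformre, hu n]
      have h4 := hAF2 (toH (u n))
      rw [h3] at h4
      have h5 : ‖F (toH (u n))‖^2 = ‖dv (W n)‖^2 := by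
        rw [(hFdata (u n)).2, hdvnorm]
        refine tsum_congr fun γ => ?_
        rw [hu n]
      linarith [h4, h5.le]
    have hfinal : A * ‖φ‖^2 ≤ ‖dv Φ‖^2 :=
      le_of_tendsto_of_tendsto' hlhs hrhs hineq
    calc A * ‖φ‖^2 ≤ ‖dv Φ‖^2 := hfinal
      _ = ∑' γ : Γ, ‖(inner ℂ ((T γ) ψ) φ : ℂ)‖^2 := hdvnorm Φ
end
end

section
/- Let σ be a quasi-Γ-invariant action of a countable discrete group Γ on (X, μ) having the tiling property with tiling set C. Then the associated unitary representation T_σ on L²(X, μ) is dual integrable with bracket [φ, ψ] = ∫_C Z_σ[φ](x) Z_σ[ψ](x)* dμ(x); in particular the Zak transform Z_σ is an isometry from L²(X, μ) into L²((C, μ), L²(vNa(Γ))), i.e. ∫_C ‖Z_σ[ψ](x)‖₂² dμ(x) = ‖ψ‖²_{L²(X,μ)}. -/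
noncomputable section
open MeasureTheory
open scoped ENNReal ComplexConjugate

/-- The unitary representation associated to a quasi-`Γ`-invariant action `σ` with
Jacobian `J`: `(T_σ(γ) ψ)(x) = J(γ⁻¹, x)^{1/2} ψ(σ_{γ⁻¹}(x))`, as a map on pointwise
defined functions. -/
def Tfun {Γ X : Type*} [Group Γ] (J : Γ → X → ℝ) (σ : Γ → X → X) (γ : Γ) (ψ : X → ℂ) :
    X → ℂ :=
  fun x => (Real.sqrt (J γ⁻¹ x) : ℂ) * ψ (σ γ⁻¹ x)

/-- The noncommutative Zak transform `Z_σ[ψ](x) = ∑_γ (T_σ(γ)ψ)(x) λ(γ)*`, recorded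
through its coefficients: `Zak J σ ψ x γ` is the coefficient of `λ(γ)*` in `Z_σ[ψ](x)`. -/
def Zak {Γ X : Type*} [Group Γ] (J : Γ → X → ℝ) (σ : Γ → X → X) (ψ : X → ℂ) (x : X)
    (γ : Γ) : ℂ :=
  Tfun J σ γ ψ x

/-- Let `σ` be a quasi-`Γ`-invariant action of a countable discrete
group `Γ` on `(X, μ)` having the tiling property with tiling set `C`, and let `T_σ` be the
associated unitary representation on `L²(X, μ)`.  Then the Zak transform is an isometry
from `L²(X, μ)` into `L²((C, μ), L²(vNa(Γ)))`:
`∫_C ‖Z_σ[ψ](x)‖₂² dμ(x) = ∫_C ∑_γ |Zak ψ x γ|² dμ(x) = ‖ψ‖²`; and `T_σ` is dual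
integrable with bracket `[φ, ψ] = ∫_C Z_σ[φ](x) Z_σ[ψ](x)* dμ(x)`, i.e. for all `γ ∈ Γ`,
`⟨φ, T_σ(γ)ψ⟩ = τ([φ,ψ] λ(γ)*) = ∫_C ∑_{γ₁} Zak φ x γ₁ · conj (Zak ψ x (γ₁ γ)) dμ(x)`. -/
theorem zak_isometry_and_dual_integrability
    {Γ X : Type*} [Group Γ] [Countable Γ] [MeasurableSpace X]
    (μ : Measure X) [SigmaFinite μ]
    (σ : Γ → X → X) (hσmeas : ∀ γ : Γ, Measurable (σ γ))
    (hσone : ∀ x : X, σ 1 x = x)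
    (hσmul : ∀ (γ γ' : Γ) (x : X), σ γ (σ γ' x) = σ (γ * γ') x)
    (J : Γ → X → ℝ) (hJmeas : ∀ γ : Γ, Measurable (J γ))
    (hJpos : ∀ (γ : Γ) (x : X), 0 < J γ x)
    (hquasi : ∀ (γ : Γ) (E : Set X), MeasurableSet E →
        μ (σ γ '' E) = ∫⁻ x in E, ENNReal.ofReal (J γ x) ∂μ)
    (C : Set X) (hC : MeasurableSet C)
    (hdisj : ∀ γ γ' : Γ, γ ≠ γ' → μ (σ γ '' C ∩ σ γ' '' C) = 0)
    (hcover : μ (Set.univ \ ⋃ γ : Γ, σ γ '' C) = 0)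
    (T : Γ →* (Lp ℂ 2 μ ≃ₗᵢ[ℂ] Lp ℂ 2 μ))
    (hT : ∀ (γ : Γ) (f : Lp ℂ 2 μ),
        ⇑((T γ) f) =ᵐ[μ] (fun x => (Real.sqrt (J γ⁻¹ x) : ℂ) * f (σ γ⁻¹ x))) :
    (∀ ψ : Lp ℂ 2 μ,
        (∫⁻ x in C, (∑' γ : Γ, ((‖Zak J σ (⇑ψ) x γ‖₊ : ℝ≥0∞) ^ 2)) ∂μ)
          = (‖ψ‖₊ : ℝ≥0∞) ^ 2) ∧
    (∀ (φ ψ : Lp ℂ 2 μ) (γ : Γ),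
        (inner ℂ ((T γ) ψ) φ : ℂ)
          = ∫ x in C, (∑' γ₁ : Γ, Zak J σ (⇑φ) x γ₁ * conj (Zak J σ (⇑ψ) x (γ₁ * γ))) ∂μ) := by
  -- basic facts about the action
  have hinv : ∀ (γ : Γ) (x : X), σ γ⁻¹ (σ γ x) = x := fun γ x => by
    rw [hσmul, inv_mul_cancel, hσone]
  have hinv' : ∀ (γ : Γ) (x : X), σ γ (σ γ⁻¹ x) = x := fun γ x => by
    simpa using hinv γ⁻¹ x
  have himg : ∀ (γ : Γ) (E : Set X), σ γ '' E = σ γ⁻¹ ⁻¹' E := by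
    intro γ E
    ext x
    constructor
    · rintro ⟨y, hy, rfl⟩
      simpa [hinv] using hy
    · intro hx
      exact ⟨σ γ⁻¹ x, hx, hinv' γ x⟩
  have hmeasC : ∀ γ : Γ, MeasurableSet (σ γ '' C) := fun γ => by
    rw [himg]; exact (hσmeas γ⁻¹) hC
  have hmap : ∀ γ : Γ, Measure.map (σ γ⁻¹) μ
      = μ.withDensity (fun x => ENNReal.ofReal (J γ x)) := by
    intro γ
    ext E hE
    rw [Measure.map_apply (hσmeas γ⁻¹) hE, withDensity_apply _ hE, ← himg, hquasi γ E hE]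
  -- change of variables, lintegral version
  have hcovL : ∀ (γ : Γ) (g : X → ℝ≥0∞), Measurable g →
      ∫⁻ x, g (σ γ⁻¹ x) ∂μ = ∫⁻ x, ENNReal.ofReal (J γ x) * g x ∂μ := by
    intro γ g hg
    rw [← lintegral_map hg (hσmeas γ⁻¹), hmap γ,
      lintegral_withDensity_eq_lintegral_mul _ ((hJmeas γ).ennreal_ofReal) hg]
    rfl
  have hcovL' : ∀ (γ : Γ) (g : X → ℝ≥0∞), Measurable g →
      ∫⁻ x, g (σ γ x) ∂μ = ∫⁻ x, ENNReal.ofReal (J γ⁻¹ x) * g x ∂μ := by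
    intro γ g hg
    have h := hcovL γ⁻¹ g hg
    rwa [inv_inv] at h
  -- change of variables, Bochner version
  have hcovB : ∀ (γ : Γ) (g : X → ℂ), Measurable g →
      ∫ x, g (σ γ x) ∂μ = ∫ x, (J γ⁻¹ x).toNNReal • g x ∂μ := by
    intro γ g hg
    have h : ∫ x, g (σ γ⁻¹⁻¹ x) ∂μ = ∫ x, (J γ⁻¹ x).toNNReal • g x ∂μ := by
      rw [← integral_map (hσmeas γ⁻¹⁻¹).aemeasurable
          hg.stronglyMeasurable.aestronglyMeasurable, hmap γ⁻¹,
        show (fun x => ENNReal.ofReal (J γ⁻¹ x))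
          = (fun x => (((J γ⁻¹ x).toNNReal : NNReal) : ℝ≥0∞)) from rfl,
        integral_withDensity_eq_integral_smul ((hJmeas γ⁻¹).real_toNNReal) g]
    rwa [inv_inv] at h
  -- the cocycle identity
  have hcocycle : ∀ α β : Γ, ∀ᵐ x ∂μ, J (α * β) x = J α (σ β x) * J β x := by
    intro α β
    have key : (fun x => ENNReal.ofReal (J (α * β) x))
        =ᵐ[μ] fun x => ENNReal.ofReal (J α (σ β x) * J β x) := by
      apply ae_eq_of_forall_setLIntegral_eq_of_sigmaFinite
        ((hJmeas _).ennreal_ofReal)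
        (((hJmeas α).comp (hσmeas β)).mul (hJmeas β)).ennreal_ofReal
      intro E hE _
      have hEβ : MeasurableSet (σ β '' E) := by
        rw [himg]; exact (hσmeas β⁻¹) hE
      have himg2 : σ (α * β) '' E = σ α '' (σ β '' E) := by
        rw [Set.image_image]
        have : (fun x => σ α (σ β x)) = σ (α * β) := funext fun x => hσmul α β x
        rw [this]
      calc ∫⁻ x in E, ENNReal.ofReal (J (α * β) x) ∂μ
          = μ (σ (α * β) '' E) := (hquasi _ E hE).symm
        _ = μ (σ α '' (σ β '' E)) := by rw [himg2]
        _ = ∫⁻ x in σ β '' E, ENNReal.ofReal (J α x) ∂μ := hquasi α _ hEβ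
        _ = ∫⁻ x, (σ β '' E).indicator (fun y => ENNReal.ofReal (J α y)) x ∂μ := by
            rw [lintegral_indicator hEβ]
        _ = ∫⁻ x, (E.indicator (fun z => ENNReal.ofReal (J α (σ β z)))) (σ β⁻¹ x) ∂μ := by
            apply lintegral_congr
            intro x
            rw [himg β E]
            by_cases hx : σ β⁻¹ x ∈ E
            · rw [Set.indicator_of_mem (show x ∈ σ β⁻¹ ⁻¹' E from hx),
                Set.indicator_of_mem hx, hinv' β x]
            · rw [Set.indicator_of_notMem (show x ∉ σ β⁻¹ ⁻¹' E from hx),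
                Set.indicator_of_notMem hx]
        _ = ∫⁻ x, ENNReal.ofReal (J β x) *
              (E.indicator (fun z => ENNReal.ofReal (J α (σ β z)))) x ∂μ := by
            exact hcovL β _
              ((((hJmeas α).comp (hσmeas β)).ennreal_ofReal).indicator hE)
        _ = ∫⁻ x in E, ENNReal.ofReal (J α (σ β x) * J β x) ∂μ := by
            rw [← lintegral_indicator hE]
            apply lintegral_congr
            intro x
            by_cases hx : x ∈ E
            · rw [Set.indicator_of_mem hx, Set.indicator_of_mem hx,
                ENNReal.ofReal_mul (le_of_lt (hJpos α _))]
              ring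
            · rw [Set.indicator_of_notMem hx, Set.indicator_of_notMem hx, mul_zero]
    filter_upwards [key] with x hx
    exact (ENNReal.ofReal_eq_ofReal_iff (le_of_lt (hJpos _ _))
      (mul_nonneg (le_of_lt (hJpos _ _)) (le_of_lt (hJpos _ _)))).mp hx
  -- tiling
  have hdisj' : Pairwise (Function.onFun (AEDisjoint μ) fun γ : Γ => σ γ '' C) := fun γ γ' h => hdisj γ γ' h
  have haecover : (⋃ γ : Γ, σ γ '' C) =ᵐ[μ] (Set.univ : Set X) := by
    rw [MeasureTheory.ae_eq_univ]
    rw [Set.compl_eq_univ_diff]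
    exact hcover
  have htileL : ∀ g : X → ℝ≥0∞,
      (∑' γ : Γ, ∫⁻ x in σ γ '' C, g x ∂μ) = ∫⁻ x, g x ∂μ := by
    intro g
    rw [← lintegral_iUnion₀ (fun γ => (hmeasC γ).nullMeasurableSet) hdisj' g,
      setLIntegral_congr haecover, setLIntegral_univ]
  have htileB : ∀ f : X → ℂ, Integrable f μ →
      (∑' γ : Γ, ∫ x in σ γ '' C, f x ∂μ) = ∫ x, f x ∂μ := by
    intro f hf
    rw [← integral_iUnion_ae (fun γ => (hmeasC γ).nullMeasurableSet) hdisj'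
        ((hf.integrableOn).mono_set (Set.subset_univ _)),
      setIntegral_congr_set haecover, setIntegral_univ]
  -- measurability of Zak coefficients
  have hZmeas : ∀ (f : X → ℂ), Measurable f → ∀ γ₀ : Γ,
      Measurable (fun x => Zak J σ f x γ₀) := by
    intro f hf γ₀
    unfold Zak Tfun
    exact (Complex.measurable_ofReal.comp
      (Real.continuous_sqrt.measurable.comp (hJmeas γ₀⁻¹))).mul (hf.comp (hσmeas γ₀⁻¹))
  -- ‖ψ‖² as a lintegral
  have hnormsq : ∀ ψ : Lp ℂ 2 μ,
      (‖ψ‖₊ : ℝ≥0∞) ^ 2 = ∫⁻ x, (‖ψ x‖₊ : ℝ≥0∞) ^ 2 ∂μ := by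
    intro ψ
    have h1 : (‖ψ‖₊ : ℝ≥0∞) = eLpNorm (⇑ψ) 2 μ := by
      rw [Lp.nnnorm_def, ENNReal.coe_toNNReal (Lp.eLpNorm_ne_top ψ)]
    rw [h1, eLpNorm_eq_lintegral_rpow_enorm_toReal two_ne_zero ENNReal.ofNat_ne_top]
    rw [← ENNReal.rpow_natCast _ 2, ← ENNReal.rpow_mul]
    norm_num
    simp only [enorm_eq_nnnorm]
  -- the key change-of-variables computation for squares
  have hkey1 : ∀ (f : X → ℂ), Measurable f → ∀ γ : Γ,
      ∫⁻ x in C, (‖Zak J σ f x γ‖₊ : ℝ≥0∞) ^ 2 ∂μ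
        = ∫⁻ x in σ γ⁻¹ '' C, (‖f x‖₊ : ℝ≥0∞) ^ 2 ∂μ := by
    intro f hf γ
    have hnn : ∀ x : X, ((‖Zak J σ f x γ‖₊ : ℝ≥0∞)) ^ 2
        = ENNReal.ofReal (J γ⁻¹ x) * (‖f (σ γ⁻¹ x)‖₊ : ℝ≥0∞) ^ 2 := by
      intro x
      unfold Zak Tfun
      rw [nnnorm_mul, ENNReal.coe_mul, mul_pow]
      congr 1
      rw [Complex.nnnorm_real, sq, ← enorm_eq_nnnorm, Real.enorm_eq_ofReal (Real.sqrt_nonneg _),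
        ← ENNReal.ofReal_mul (Real.sqrt_nonneg _),
        Real.mul_self_sqrt (le_of_lt (hJpos γ⁻¹ x))]
    have hmeasf2 : Measurable fun z : X => (‖f (σ γ⁻¹ z)‖₊ : ℝ≥0∞) ^ 2 :=
      ((hf.comp (hσmeas γ⁻¹)).nnnorm.coe_nnreal_ennreal).pow_const 2
    have hmeasf2' : Measurable fun z : X => (‖f z‖₊ : ℝ≥0∞) ^ 2 :=
      (hf.nnnorm.coe_nnreal_ennreal).pow_const 2
    calc ∫⁻ x in C, (‖Zak J σ f x γ‖₊ : ℝ≥0∞) ^ 2 ∂μ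
        = ∫⁻ x, C.indicator
            (fun z => ENNReal.ofReal (J γ⁻¹ z) * (‖f (σ γ⁻¹ z)‖₊ : ℝ≥0∞) ^ 2) x ∂μ := by
          rw [← lintegral_indicator hC]
          apply lintegral_congr
          intro x
          by_cases hx : x ∈ C
          · rw [Set.indicator_of_mem hx, Set.indicator_of_mem hx, hnn x]
          · rw [Set.indicator_of_notMem hx, Set.indicator_of_notMem hx]
      _ = ∫⁻ x, ENNReal.ofReal (J γ⁻¹ x) *
            (C.indicator (fun z => (‖f (σ γ⁻¹ z)‖₊ : ℝ≥0∞) ^ 2)) x ∂μ := by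
          apply lintegral_congr
          intro x
          by_cases hx : x ∈ C
          · rw [Set.indicator_of_mem hx, Set.indicator_of_mem hx]
          · rw [Set.indicator_of_notMem hx, Set.indicator_of_notMem hx, mul_zero]
      _ = ∫⁻ x, (C.indicator (fun z => (‖f (σ γ⁻¹ z)‖₊ : ℝ≥0∞) ^ 2)) (σ γ x) ∂μ :=
          (hcovL' γ _ (hmeasf2.indicator hC)).symm
      _ = ∫⁻ x, ((σ γ⁻¹ '' C).indicator (fun z => (‖f z‖₊ : ℝ≥0∞) ^ 2)) x ∂μ := by
          apply lintegral_congr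
          intro x
          have hmem : x ∈ σ γ⁻¹ '' C ↔ σ γ x ∈ C := by
            rw [himg γ⁻¹, inv_inv]
            rfl
          by_cases hx : σ γ x ∈ C
          · rw [Set.indicator_of_mem hx, Set.indicator_of_mem (hmem.mpr hx), hinv γ x]
          · rw [Set.indicator_of_notMem hx,
              Set.indicator_of_notMem (fun h => hx (hmem.mp h))]
      _ = ∫⁻ x in σ γ⁻¹ '' C, (‖f x‖₊ : ℝ≥0∞) ^ 2 ∂μ := by
          rw [lintegral_indicator (hmeasC γ⁻¹)]
  -- Part 1
  have hpart1 : ∀ ψ : Lp ℂ 2 μ,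
      (∫⁻ x in C, (∑' γ : Γ, ((‖Zak J σ (⇑ψ) x γ‖₊ : ℝ≥0∞) ^ 2)) ∂μ)
        = (‖ψ‖₊ : ℝ≥0∞) ^ 2 := by
    intro ψ
    have hψm : Measurable (⇑ψ) := (Lp.stronglyMeasurable ψ).measurable
    rw [lintegral_tsum (fun γ =>
      (((hZmeas (⇑ψ) hψm γ).nnnorm.coe_nnreal_ennreal).pow_const 2).aemeasurable)]
    calc ∑' γ : Γ, ∫⁻ x in C, (‖Zak J σ (⇑ψ) x γ‖₊ : ℝ≥0∞) ^ 2 ∂μ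
        = ∑' γ : Γ, ∫⁻ x in σ γ⁻¹ '' C, (‖(⇑ψ) x‖₊ : ℝ≥0∞) ^ 2 ∂μ :=
          tsum_congr fun γ => hkey1 (⇑ψ) hψm γ
      _ = ∑' γ : Γ, ∫⁻ x in σ γ '' C, (‖(⇑ψ) x‖₊ : ℝ≥0∞) ^ 2 ∂μ :=
          (Equiv.inv Γ).tsum_eq fun γ => ∫⁻ x in σ γ '' C, (‖(⇑ψ) x‖₊ : ℝ≥0∞) ^ 2 ∂μ
      _ = ∫⁻ x, (‖(⇑ψ) x‖₊ : ℝ≥0∞) ^ 2 ∂μ := htileL _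
      _ = (‖ψ‖₊ : ℝ≥0∞) ^ 2 := (hnormsq ψ).symm
  refine ⟨hpart1, ?_⟩
  intro φ ψ γ
  have hφm : Measurable (⇑φ) := (Lp.stronglyMeasurable φ).measurable
  have hψm : Measurable (⇑ψ) := (Lp.stronglyMeasurable ψ).measurable
  have hconj : ∀ g : X → ℂ, Measurable g → Measurable fun x => conj (g x) := by
    intro g hg
    exact Complex.continuous_conj.measurable.comp hg
  -- algebra lemma
  have halg : ∀ (a b : ℝ) (u v : ℂ), 0 ≤ a → 0 ≤ b →
      (Real.sqrt a : ℂ) * u * conj ((Real.sqrt (b * a) : ℂ) * v)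
        = (a : ℂ) * (u * conj ((Real.sqrt b : ℂ) * v)) := by
    intro a b u v ha hb
    rw [Real.sqrt_mul hb a, Complex.ofReal_mul, map_mul, map_mul, map_mul,
      Complex.conj_ofReal, Complex.conj_ofReal]
    have hsq : (Real.sqrt a : ℂ) * (Real.sqrt a : ℂ) = (a : ℂ) := by
      rw [← Complex.ofReal_mul, Real.mul_self_sqrt ha]
    linear_combination (u * (Real.sqrt b : ℂ) * conj v) * hsq
  set F : X → ℂ :=
    fun y => (⇑φ) y * conj ((Real.sqrt (J γ⁻¹ y) : ℂ) * (⇑ψ) (σ γ⁻¹ y)) with hFdef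
  have hFmeas : Measurable F :=
    hφm.mul (hconj _ ((Complex.measurable_ofReal.comp
      (Real.continuous_sqrt.measurable.comp (hJmeas γ⁻¹))).mul (hψm.comp (hσmeas γ⁻¹))))
  -- per-term change of variables
  have hterm : ∀ γ₁ : Γ,
      (∫ x in C, Zak J σ (⇑φ) x γ₁ * conj (Zak J σ (⇑ψ) x (γ₁ * γ)) ∂μ)
        = ∫ x in σ γ₁⁻¹ '' C, F x ∂μ := by
    intro γ₁
    have hg : Measurable (C.indicator fun z => F (σ γ₁⁻¹ z)) :=
      (hFmeas.comp (hσmeas γ₁⁻¹)).indicator hC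
    have hae : (C.indicator fun z =>
          Zak J σ (⇑φ) z γ₁ * conj (Zak J σ (⇑ψ) z (γ₁ * γ)))
        =ᵐ[μ] fun x => (J γ₁⁻¹ x).toNNReal • (C.indicator fun z => F (σ γ₁⁻¹ z)) x := by
      filter_upwards [hcocycle γ⁻¹ γ₁⁻¹] with x hx
      by_cases hxC : x ∈ C
      · rw [Set.indicator_of_mem hxC, Set.indicator_of_mem hxC]
        unfold Zak Tfun
        rw [mul_inv_rev, ← hσmul γ⁻¹ γ₁⁻¹ x, hx,
          NNReal.smul_def, Real.coe_toNNReal _ (le_of_lt (hJpos γ₁⁻¹ x)),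
          Complex.real_smul]
        simp only [hFdef]
        exact halg _ _ _ _ (le_of_lt (hJpos γ₁⁻¹ x)) (le_of_lt (hJpos γ⁻¹ _))
      · rw [Set.indicator_of_notMem hxC, Set.indicator_of_notMem hxC, smul_zero]
    calc (∫ x in C, Zak J σ (⇑φ) x γ₁ * conj (Zak J σ (⇑ψ) x (γ₁ * γ)) ∂μ)
        = ∫ x, (C.indicator fun z =>
            Zak J σ (⇑φ) z γ₁ * conj (Zak J σ (⇑ψ) z (γ₁ * γ))) x ∂μ :=
          (integral_indicator hC).symm
      _ = ∫ x, (J γ₁⁻¹ x).toNNReal • (C.indicator fun z => F (σ γ₁⁻¹ z)) x ∂μ :=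
          integral_congr_ae hae
      _ = ∫ x, (C.indicator fun z => F (σ γ₁⁻¹ z)) (σ γ₁ x) ∂μ := (hcovB γ₁ _ hg).symm
      _ = ∫ x, ((σ γ₁⁻¹ '' C).indicator F) x ∂μ := by
          apply integral_congr_ae
          apply Filter.EventuallyEq.of_eq
          funext x
          have hmem : x ∈ σ γ₁⁻¹ '' C ↔ σ γ₁ x ∈ C := by
            rw [himg γ₁⁻¹, inv_inv]
            rfl
          by_cases hx2 : σ γ₁ x ∈ C
          · rw [Set.indicator_of_mem hx2, Set.indicator_of_mem (hmem.mpr hx2), hinv γ₁ x]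
          · rw [Set.indicator_of_notMem hx2,
              Set.indicator_of_notMem (fun h => hx2 (hmem.mp h))]
      _ = ∫ x in σ γ₁⁻¹ '' C, F x ∂μ := integral_indicator (hmeasC γ₁⁻¹)
  -- integrability of F
  have hinner_int : Integrable (fun x => conj (((T γ) ψ : Lp ℂ 2 μ) x) * (⇑φ) x) μ := by
    have h := L2.integrable_inner (𝕜 := ℂ) ((T γ) ψ) φ
    have h' : Integrable (fun x => (⇑φ) x * conj (((T γ) ψ : Lp ℂ 2 μ) x)) μ := by
      simpa [RCLike.inner_apply] using h
    exact h'.congr (Filter.Eventually.of_forall fun x => mul_comm _ _)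
  have hFae : F =ᵐ[μ] fun x => (⇑φ) x * conj (((T γ) ψ : Lp ℂ 2 μ) x) := by
    filter_upwards [hT γ ψ] with x hx
    simp only [hFdef]
    rw [hx]
  have hFint : Integrable F μ := by
    apply hinner_int.congr
    filter_upwards [hFae] with x hx
    rw [hx, mul_comm]
  -- the inner product as an integral of F
  have hinner : (inner ℂ ((T γ) ψ) φ : ℂ) = ∫ x, F x ∂μ := by
    rw [L2.inner_def]
    apply integral_congr_ae
    filter_upwards [hFae] with x hx
    rw [RCLike.inner_apply, hx, mul_comm]
  -- summing over the tiles
  have hsum : (∑' γ₁ : Γ, ∫ x in σ γ₁⁻¹ '' C, F x ∂μ) = ∫ x, F x ∂μ := by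
    calc (∑' γ₁ : Γ, ∫ x in σ γ₁⁻¹ '' C, F x ∂μ)
        = ∑' γ₁ : Γ, ∫ x in σ γ₁ '' C, F x ∂μ :=
          (Equiv.inv Γ).tsum_eq fun β => ∫ x in σ β '' C, F x ∂μ
      _ = ∫ x, F x ∂μ := htileB F hFint
  -- finiteness for the integral-tsum swap
  have hmul_le : ∀ a b : ℝ≥0∞, a * b ≤ a ^ 2 + b ^ 2 := by
    intro a b
    rcases le_total a b with h | h
    · calc a * b ≤ b * b := mul_le_mul_left h b
        _ = b ^ 2 := (sq b).symm
        _ ≤ a ^ 2 + b ^ 2 := le_add_self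
    · calc a * b ≤ a * a := mul_le_mul_right h a
        _ = a ^ 2 := (sq a).symm
        _ ≤ a ^ 2 + b ^ 2 := le_self_add
  have hA : (∑' γ₁ : Γ, ∫⁻ x in C, (‖Zak J σ (⇑φ) x γ₁‖₊ : ℝ≥0∞) ^ 2 ∂μ)
      = (‖φ‖₊ : ℝ≥0∞) ^ 2 := by
    rw [← lintegral_tsum (fun γ₁ =>
      (((hZmeas (⇑φ) hφm γ₁).nnnorm.coe_nnreal_ennreal).pow_const 2).aemeasurable)]
    exact hpart1 φ
  have hB : (∑' γ₁ : Γ, ∫⁻ x in C, (‖Zak J σ (⇑ψ) x (γ₁ * γ)‖₊ : ℝ≥0∞) ^ 2 ∂μ)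
      = (‖ψ‖₊ : ℝ≥0∞) ^ 2 := by
    have he := (Equiv.mulRight γ).tsum_eq
      (fun β => ∫⁻ x in C, (‖Zak J σ (⇑ψ) x β‖₊ : ℝ≥0∞) ^ 2 ∂μ)
    simp only [Equiv.coe_mulRight] at he
    rw [he]
    rw [← lintegral_tsum (fun γ₁ =>
      (((hZmeas (⇑ψ) hψm γ₁).nnnorm.coe_nnreal_ennreal).pow_const 2).aemeasurable)]
    exact hpart1 ψ
  have hSfin : (∑' γ₁ : Γ, ∫⁻ x in C,
      ‖Zak J σ (⇑φ) x γ₁ * conj (Zak J σ (⇑ψ) x (γ₁ * γ))‖₊ ∂μ) ≠ ⊤ := by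
    have hb : ∀ γ₁ : Γ, (∫⁻ x in C,
        ‖Zak J σ (⇑φ) x γ₁ * conj (Zak J σ (⇑ψ) x (γ₁ * γ))‖₊ ∂μ)
        ≤ (∫⁻ x in C, (‖Zak J σ (⇑φ) x γ₁‖₊ : ℝ≥0∞) ^ 2 ∂μ)
          + ∫⁻ x in C, (‖Zak J σ (⇑ψ) x (γ₁ * γ)‖₊ : ℝ≥0∞) ^ 2 ∂μ := by
      intro γ₁
      rw [← lintegral_add_left
        (((hZmeas (⇑φ) hφm γ₁).nnnorm.coe_nnreal_ennreal).pow_const 2)]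
      apply lintegral_mono
      intro x
      calc (‖Zak J σ (⇑φ) x γ₁ * conj (Zak J σ (⇑ψ) x (γ₁ * γ))‖₊ : ℝ≥0∞)
          = (‖Zak J σ (⇑φ) x γ₁‖₊ : ℝ≥0∞) * (‖Zak J σ (⇑ψ) x (γ₁ * γ)‖₊ : ℝ≥0∞) := by
            rw [nnnorm_mul, ENNReal.coe_mul, RCLike.nnnorm_conj]
        _ ≤ _ := hmul_le _ _
    have hle := ENNReal.tsum_le_tsum hb
    rw [ENNReal.tsum_add, hA, hB] at hle
    exact ne_top_of_le_ne_top (ENNReal.add_ne_top.mpr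
      ⟨ENNReal.pow_ne_top ENNReal.coe_ne_top, ENNReal.pow_ne_top ENNReal.coe_ne_top⟩) hle
  have hswap : (∫ x in C,
      (∑' γ₁ : Γ, Zak J σ (⇑φ) x γ₁ * conj (Zak J σ (⇑ψ) x (γ₁ * γ))) ∂μ)
      = ∑' γ₁ : Γ, ∫ x in C, Zak J σ (⇑φ) x γ₁ * conj (Zak J σ (⇑ψ) x (γ₁ * γ)) ∂μ := by
    apply integral_tsum
    · intro γ₁
      exact ((hZmeas (⇑φ) hφm γ₁).mul
        (hconj _ (hZmeas (⇑ψ) hψm (γ₁ * γ)))).aestronglyMeasurable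
    · exact hSfin
  calc (inner ℂ ((T γ) ψ) φ : ℂ)
      = ∫ x, F x ∂μ := hinner
    _ = ∑' γ₁ : Γ, ∫ x in σ γ₁⁻¹ '' C, F x ∂μ := hsum.symm
    _ = ∑' γ₁ : Γ, ∫ x in C, Zak J σ (⇑φ) x γ₁ * conj (Zak J σ (⇑ψ) x (γ₁ * γ)) ∂μ :=
        tsum_congr fun γ₁ => (hterm γ₁).symm
    _ = ∫ x in C, (∑' γ₁ : Γ, Zak J σ (⇑φ) x γ₁ * conj (Zak J σ (⇑ψ) x (γ₁ * γ))) ∂μ :=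
        hswap.symm
end
end
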